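/- Setting u_{2n-1} = (H^0_{n-1} H^1_n)/(H^0_n H^1_{n-1}) and u_{2n} = (H^0_{n+1} H^1_{n-1})/(H^0_n H^1_n) for a sequence c with all relevant Hankel determinants nonzero, the telescoping identity G^m_n/H^m_n − G^m_{n-1}/H^m_{n-1} = u_{2n-2+m} + u_{2n-1+m} holds for m ∈ {0,1} and n ≥ 1, with conventions G^0_0 = −u₀, G^1_0 = 0, H^m_0 = 1, u₀ arbitrary. -/

import Mathlib

/-- Hankel determinant `H^m_n = det(c_{i+j+m})`. -/
noncomputable def Hk (c : ℕ → ℝ) (m n : ℕ) : ℝ :=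
  (Matrix.of fun i j : Fin n => c (i.val + j.val + m)).det

/-- `G^m_n`: the Hankel determinant `H^m_n` with its last row
`(c_{m+n-1},…,c_{m+2n-2})` replaced by `(c_{m+n},…,c_{m+2n-1})`;
by convention `G^m_0 = 0`. -/
noncomputable def Gk (c : ℕ → ℝ) (m n : ℕ) : ℝ :=
  if n = 0 then 0 else
  (Matrix.of fun i j : Fin n =>
    if i.val = n - 1 then c (m + n + j.val) else c (i.val + j.val + m)).det

/-- `E^m_n`: determinant of the `n×n` matrix with rows
`(c_{m+k},…,c_{m+k+n-2}, c_{m+k+n+1})`, i.e. the last column advanced by 2. -/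
noncomputable def Ek (c : ℕ → ℝ) (m n : ℕ) : ℝ :=
  (Matrix.of fun i j : Fin n =>
    if j.val = n - 1 then c (m + i.val + n + 1) else c (m + i.val + j.val)).det

/-- `F^m_n`: determinant of the `n×n` matrix with rows
`(c_{m+k},…,c_{m+k+n-3}, c_{m+k+n-1}, c_{m+k+n})`, i.e. column `n−2` skipped;
by convention `F^m_1 = 0`. -/
noncomputable def Fk (c : ℕ → ℝ) (m n : ℕ) : ℝ :=
  if n = 1 then 0 else
  (Matrix.of fun i j : Fin n =>
    if n - 2 ≤ j.val then c (m + i.val + j.val + 1) else c (m + i.val + j.val)).det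

/-- `S^m_n`: determinant of `(c_{m+σ(i)+σ(j)})` where `σ(i) = i` for `i ≤ n−2`
and `σ(n−1) = n`. -/
noncomputable def Sk (c : ℕ → ℝ) (m n : ℕ) : ℝ :=
  (Matrix.of fun i j : Fin n =>
    c (m + (if i.val = n - 1 then n else i.val) +
        (if j.val = n - 1 then n else j.val))).det

/-- `G^m_n` with the extended conventions `G⁰_0 = −u₀`, `G¹_0 = 0`. -/
noncomputable def Gext (c : ℕ → ℝ) (u₀ : ℝ) (m n : ℕ) : ℝ :=
  if n = 0 then (if m = 0 then -u₀ else 0) else Gk c m n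

/-!
For `n + 2` vectors `w t` in `R^(n+1)`, `∑ t, (-1)^t det (w without w t) • w t = 0`; a linear
form `L` that kills the first `n` of the `n + 3` vectors `X, b, x, d` in `R^(n+2)` then gives the
three-term Plücker relation `det(X,x,d) L b - det(X,b,d) L x + det(X,b,x) L d = 0`. Let `X, b` be
the first `n + 1` rows of the Hankel matrix of `H¹_{n+2}`, `d` the last unit vector, and `L x` the
determinant of the Hankel matrix of `H⁰_{n+2}` with last row `x`. Reading determinants whose last
row is a unit vector as minors, `x = e_n` gives `G¹_{n+1} H⁰_{n+1} - G⁰_{n+1} H¹_{n+1} =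
H⁰_{n+2} H¹_n`, and `x` = the last row of the `H¹_{n+2}` matrix gives
`G⁰_{n+2} H¹_{n+1} - G¹_{n+1} H⁰_{n+2} = H⁰_{n+1} H¹_{n+2}`.

Dividing by `H⁰ H¹`, the consecutive differences of the interleaved sequence
`G⁰_0/H⁰_0, G¹_0/H¹_0, G⁰_1/H⁰_1, G¹_1/H¹_1, …` are `u 0, u 1, u 2, …`, and the identity
telescopes.
-/

namespace Matrix

variable {R : Type*} [CommRing R]

theorem sum_neg_one_pow_mul_det_succAbove_smul {n : ℕ} (w : Fin (n + 2) → Fin (n + 1) → R) :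
    ∑ t : Fin (n + 2), ((-1) ^ (t : ℕ) * (of fun i => w (t.succAbove i)).det) • w t = 0 := by
  ext r
  -- stacking row `r` on top of the `(n + 1) × (n + 2)` matrix `(w t i)` repeats a row
  set M : Matrix (Fin (n + 2)) (Fin (n + 2)) R := of fun i t => w t (Fin.cases r id i)
  have hM : M.det = 0 := det_zero_of_row_eq (Fin.succ_ne_zero r).symm (by ext; simp [M])
  rw [det_succ_row_zero] at hM
  rw [Pi.zero_apply, ← hM, Finset.sum_apply]
  refine Finset.sum_congr rfl fun t _ => ?_
  have hminor : M.submatrix Fin.succ t.succAbove = (of fun i => w (t.succAbove i))ᵀ := by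
    ext; simp [M]
  rw [hminor, det_transpose]
  simp only [Pi.smul_apply, smul_eq_mul, of_apply, Fin.cases_zero, M]
  ring

theorem of_snoc_snoc {α : Type*} {n : ℕ} (B : Matrix (Fin (n + 2)) (Fin (n + 2)) α)
    (x y : Fin (n + 2) → α) :
    of (Fin.snoc (Fin.snoc (fun i => B i.castSucc.castSucc) x) y) =
      (B.updateRow (Fin.last n).castSucc x).updateRow (Fin.last (n + 1)) y := by
  ext i j
  induction i using Fin.lastCases with
  | last => simp
  | cast i =>
    induction i using Fin.lastCases with
    | last => simp
    | cast i => simp [(Fin.castSucc_lt_last _).ne]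

theorem det_updateRow_plucker {n : ℕ} (B : Matrix (Fin (n + 2)) (Fin (n + 2)) R)
    (L : (Fin (n + 2) → R) →ₗ[R] R) (hL : ∀ i : Fin n, L (B i.castSucc.castSucc) = 0)
    (b x d : Fin (n + 2) → R) :
    ((B.updateRow (Fin.last n).castSucc x).updateRow (Fin.last (n + 1)) d).det * L b -
      ((B.updateRow (Fin.last n).castSucc b).updateRow (Fin.last (n + 1)) d).det * L x +
      ((B.updateRow (Fin.last n).castSucc b).updateRow (Fin.last (n + 1)) x).det * L d = 0 := by
  set X : Fin n → Fin (n + 2) → R := fun i => B i.castSucc.castSucc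
  set w : Fin (n + 3) → Fin (n + 2) → R := Fin.snoc (Fin.snoc (Fin.snoc X b) x) d
  have hw₁ : (fun i => w ((Fin.last n).castSucc.castSucc.succAbove i)) =
      Fin.snoc (Fin.snoc X x) d := by
    funext i
    induction i using Fin.lastCases with
    | last => simp [w]
    | cast i =>
      induction i using Fin.lastCases with
      | last => simp [w, Fin.succ_castSucc]
      | cast i => simp [w]
  have hw₂ : (fun i => w ((Fin.last (n + 1)).castSucc.succAbove i)) =
      Fin.snoc (Fin.snoc X b) d := by
    funext i
    induction i using Fin.lastCases with
    | last => simp [w]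
    | cast i =>
      induction i using Fin.lastCases with
      | last => simp [w]
      | cast i => simp [w]
  have h := congrArg L (sum_neg_one_pow_mul_det_succAbove_smul w)
  simp only [Fin.sum_univ_castSucc, Fin.val_castSucc, Fin.snoc_castSucc, Fin.val_last, hw₁, hw₂,
    Fin.snoc_last, Fin.succAbove_last, of_snoc_snoc, map_add, map_sum, map_smul, hL,
    smul_eq_mul, mul_zero, Finset.sum_const_zero, zero_add, map_zero, w, X] at h
  rcases neg_one_pow_eq_or R n with hn | hn <;> rw [pow_add, pow_add, hn] at h
  · linear_combination h
  · linear_combination -h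

@[simps]
def detUpdateRow {ι : Type*} [Fintype ι] [DecidableEq ι] (A : Matrix ι ι R) (i : ι) :
    (ι → R) →ₗ[R] R where
  toFun x := (A.updateRow i x).det
  map_add' := det_updateRow_add A i
  map_smul' := det_updateRow_smul A i

theorem det_updateRow_last_single_last {n : ℕ} (A : Matrix (Fin (n + 1)) (Fin (n + 1)) R) :
    (A.updateRow (Fin.last n) (Pi.single (Fin.last n) 1)).det =
      (A.submatrix Fin.castSucc Fin.castSucc).det := by
  rw [← adjugate_apply, adjugate_fin_succ_eq_det_submatrix, Fin.succAbove_last]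
  simp

theorem det_updateRow_last_single_castSucc_last {n : ℕ}
    (A : Matrix (Fin (n + 2)) (Fin (n + 2)) R) :
    (A.updateRow (Fin.last (n + 1)) (Pi.single (Fin.last n).castSucc 1)).det =
      -(A.submatrix Fin.castSucc (Fin.last n).castSucc.succAbove).det := by
  rw [← adjugate_apply, adjugate_fin_succ_eq_det_submatrix, Fin.succAbove_last]
  simp

theorem submatrix_castSucc_updateRow_castSucc {α : Type*} {n : ℕ}
    (A : Matrix (Fin (n + 1)) (Fin (n + 1)) α) (i : Fin n) (x : Fin (n + 1) → α) :
    (A.updateRow i.castSucc x).submatrix Fin.castSucc Fin.castSucc =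
      (A.submatrix Fin.castSucc Fin.castSucc).updateRow i (fun j => x j.castSucc) := by
  ext a b
  by_cases h : a = i <;> simp [h]

end Matrix

open Matrix

noncomputable def hankelMatrix (c : ℕ → ℝ) (m n : ℕ) : Matrix (Fin n) (Fin n) ℝ :=
  of fun i j => c (i + j + m)

theorem Hk_eq_det_hankelMatrix (c : ℕ → ℝ) (m n : ℕ) :
    Hk c m n = (hankelMatrix c m n).det :=
  rfl

theorem Hk_eq_det_updateRow_single_last (c : ℕ → ℝ) (m n : ℕ) :
    Hk c m n =
      ((hankelMatrix c m (n + 1)).updateRow (Fin.last n) (Pi.single (Fin.last n) 1)).det := by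
  rw [det_updateRow_last_single_last]
  rfl

theorem Gk_succ_eq_det_updateRow (c : ℕ → ℝ) (m n : ℕ) :
    Gk c m (n + 1) =
      ((hankelMatrix c m (n + 1)).updateRow (Fin.last n) fun j => c (n + 1 + j + m)).det := by
  rw [Gk, if_neg n.succ_ne_zero]
  congr 1
  ext i j
  by_cases hi : i = Fin.last n
  · subst hi
    simp only [add_tsub_cancel_right, of_apply, Fin.val_last, ↓reduceIte, updateRow_self]
    ring_nf
  · have hi' : (i : ℕ) ≠ n := fun h => hi (Fin.ext h)
    simp [hankelMatrix, hi, hi']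

theorem neg_Gk_succ_eq_det_updateRow_single (c : ℕ → ℝ) (m n : ℕ) :
    -Gk c m (n + 1) = ((hankelMatrix c m (n + 2)).updateRow (Fin.last (n + 1))
      (Pi.single (Fin.last n).castSucc 1)).det := by
  rw [det_updateRow_last_single_castSucc_last, neg_inj, ← det_transpose,
    Gk_succ_eq_det_updateRow]
  congr 1
  ext i j
  by_cases hi : i = Fin.last n
  · subst hi
    simp only [hankelMatrix, updateRow_self, transpose_apply, submatrix_apply, ne_eq,
      Fin.castSucc_ne_last, not_false_eq_true, Fin.succAbove_ne_last_last, of_apply,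
      Fin.val_castSucc, Fin.val_last]
    ring_nf
  · have hlt : i.castSucc < (Fin.last n).castSucc :=
      Fin.castSucc_lt_castSucc_iff.mpr (Fin.lt_last_iff_ne_last.mpr hi)
    simp only [hankelMatrix, ne_eq, hi, not_false_eq_true, updateRow_ne, of_apply,
      transpose_apply, submatrix_apply, Fin.succAbove_of_castSucc_lt _ _ hlt, Fin.val_castSucc]
    ring_nf

theorem hankelMatrix_plucker (c : ℕ → ℝ) (n : ℕ) (x : Fin (n + 2) → ℝ) :
    (((hankelMatrix c 1 (n + 2)).updateRow (Fin.last n).castSucc x).updateRow (Fin.last (n + 1))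
        (Pi.single (Fin.last (n + 1)) 1)).det * Hk c 0 (n + 2) -
      Hk c 1 (n + 1) * ((hankelMatrix c 0 (n + 2)).updateRow (Fin.last (n + 1)) x).det +
      ((hankelMatrix c 1 (n + 2)).updateRow (Fin.last (n + 1)) x).det * Hk c 0 (n + 1) = 0 := by
  set A := hankelMatrix c 0 (n + 2)
  set B := hankelMatrix c 1 (n + 2)
  have hrow : B (Fin.last n).castSucc = A (Fin.last (n + 1)) := by
    ext j
    simp only [hankelMatrix, of_apply, Fin.val_castSucc, Fin.val_last, add_zero, B, A]
    ring_nf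
  have hL : ∀ i : Fin n, detUpdateRow A (Fin.last (n + 1)) (B i.castSucc.castSucc) = 0 := by
    intro i
    have hne : i.succ.castSucc ≠ Fin.last (n + 1) := Fin.castSucc_ne_last _
    refine det_zero_of_row_eq hne ?_
    ext j
    simp only [hankelMatrix, updateRow_ne hne, updateRow_self, of_apply, Fin.val_succ,
      Fin.val_castSucc, add_zero, A, B]
    ring_nf
  have h := det_updateRow_plucker B _ hL (B (Fin.last n).castSucc) x
    (Pi.single (Fin.last (n + 1)) 1)
  rwa [updateRow_eq_self, detUpdateRow_apply, detUpdateRow_apply, detUpdateRow_apply, hrow,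
    updateRow_eq_self, ← Hk_eq_det_updateRow_single_last,
    ← Hk_eq_det_updateRow_single_last] at h

theorem Gk_zero_mul_Hk_one_sub_Gk_one_mul_Hk_zero (c : ℕ → ℝ) (n : ℕ) :
    Gk c 0 (n + 1) * Hk c 1 n - Gk c 1 n * Hk c 0 (n + 1) = Hk c 0 n * Hk c 1 (n + 1) := by
  cases n with
  | zero => simp [Gk, Hk]
  | succ n =>
    have h := hankelMatrix_plucker c n (hankelMatrix c 1 (n + 2) (Fin.last (n + 1)))
    have hG₁ : Gk c 1 (n + 1) = (((hankelMatrix c 1 (n + 2)).updateRow (Fin.last n).castSucc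
        (hankelMatrix c 1 (n + 2) (Fin.last (n + 1)))).updateRow (Fin.last (n + 1))
        (Pi.single (Fin.last (n + 1)) 1)).det := by
      rw [det_updateRow_last_single_last, submatrix_castSucc_updateRow_castSucc,
        Gk_succ_eq_det_updateRow]
      rfl
    have hG₀ : Gk c 0 (n + 2) = ((hankelMatrix c 0 (n + 2)).updateRow (Fin.last (n + 1))
        (hankelMatrix c 1 (n + 2) (Fin.last (n + 1)))).det := by
      rw [Gk_succ_eq_det_updateRow]
      congr 2
      ext j
      simp only [add_zero, hankelMatrix, of_apply, Fin.val_last]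
      ring_nf
    rw [updateRow_eq_self, ← hG₁, ← hG₀, ← Hk_eq_det_hankelMatrix] at h
    linear_combination -h

theorem Gk_one_mul_Hk_zero_sub_Gk_zero_mul_Hk_one (c : ℕ → ℝ) (n : ℕ) :
    Gk c 1 (n + 1) * Hk c 0 (n + 1) - Gk c 0 (n + 1) * Hk c 1 (n + 1) =
      Hk c 0 (n + 2) * Hk c 1 n := by
  have h := hankelMatrix_plucker c n (Pi.single (Fin.last n).castSucc 1)
  have hH : Hk c 1 n = (((hankelMatrix c 1 (n + 2)).updateRow (Fin.last n).castSucc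
      (Pi.single (Fin.last n).castSucc 1)).updateRow (Fin.last (n + 1))
      (Pi.single (Fin.last (n + 1)) 1)).det := by
    rw [det_updateRow_last_single_last, submatrix_castSucc_updateRow_castSucc,
      Hk_eq_det_updateRow_single_last]
    congr 2
    ext j
    simp [Pi.single_apply]
  rw [← hH, ← neg_Gk_succ_eq_det_updateRow_single, ← neg_Gk_succ_eq_det_updateRow_single] at h
  linear_combination -h

theorem Gk_zero_div_sub_Gk_one_div (c : ℕ → ℝ) (n : ℕ) (h₀ : Hk c 0 (n + 1) ≠ 0)
    (h₁ : Hk c 1 n ≠ 0) :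
    Gk c 0 (n + 1) / Hk c 0 (n + 1) - Gk c 1 n / Hk c 1 n =
      Hk c 0 n * Hk c 1 (n + 1) / (Hk c 0 (n + 1) * Hk c 1 n) := by
  rw [div_sub_div _ _ h₀ h₁]
  congr 1
  linear_combination Gk_zero_mul_Hk_one_sub_Gk_one_mul_Hk_zero c n

theorem Gk_one_div_sub_Gk_zero_div (c : ℕ → ℝ) (n : ℕ) (h₀ : Hk c 0 (n + 1) ≠ 0)
    (h₁ : Hk c 1 (n + 1) ≠ 0) :
    Gk c 1 (n + 1) / Hk c 1 (n + 1) - Gk c 0 (n + 1) / Hk c 0 (n + 1) =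
      Hk c 0 (n + 2) * Hk c 1 n / (Hk c 0 (n + 1) * Hk c 1 (n + 1)) := by
  rw [div_sub_div _ _ h₁ h₀, mul_comm (Hk c 1 (n + 1)) (Hk c 0 (n + 1))]
  congr 1
  linear_combination Gk_one_mul_Hk_zero_sub_Gk_zero_mul_Hk_one c n

/-- Telescoping identity: with `u_{2n-1} = H⁰_{n-1}H¹_n/(H⁰_n H¹_{n-1})`,
`u_{2n} = H⁰_{n+1}H¹_{n-1}/(H⁰_n H¹_n)` for `n ≥ 1`, and `u 0 = u₀`,
one has `G^m_n/H^m_n − G^m_{n-1}/H^m_{n-1} = u_{2n-2+m} + u_{2n-1+m}`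
for `m ∈ {0,1}`, `n ≥ 1`. -/
theorem telescoping_G_over_H (c : ℕ → ℝ) (u₀ : ℝ) (u : ℕ → ℝ)
    (hH : ∀ m n : ℕ, m = 0 ∨ m = 1 → Hk c m n ≠ 0)
    (hu0 : u 0 = u₀)
    (huodd : ∀ n : ℕ, 1 ≤ n →
      u (2 * n - 1) = Hk c 0 (n - 1) * Hk c 1 n / (Hk c 0 n * Hk c 1 (n - 1)))
    (hueven : ∀ n : ℕ, 1 ≤ n →
      u (2 * n) = Hk c 0 (n + 1) * Hk c 1 (n - 1) / (Hk c 0 n * Hk c 1 n))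
    (m : ℕ) (hm : m = 0 ∨ m = 1) (n : ℕ) (hn : 1 ≤ n) :
    Gext c u₀ m n / Hk c m n - Gext c u₀ m (n - 1) / Hk c m (n - 1) =
      u (2 * n - 2 + m) + u (2 * n - 1 + m) := by
  have hH₀ : ∀ k, Hk c 0 k ≠ 0 := fun k => hH 0 k (Or.inl rfl)
  have hH₁ : ∀ k, Hk c 1 k ≠ 0 := fun k => hH 1 k (Or.inr rfl)
  have hG₀ : ∀ k, Gext c u₀ 0 (k + 1) = Gk c 0 (k + 1) := fun k => if_neg k.succ_ne_zero
  have hG₁ : ∀ k, Gext c u₀ 1 k = Gk c 1 k := by rintro (_ | k) <;> simp [Gext, Gk]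
  have hodd : ∀ k, u (2 * k + 1) =
      Gext c u₀ 0 (k + 1) / Hk c 0 (k + 1) - Gext c u₀ 1 k / Hk c 1 k := by
    intro k
    have hu := huodd (k + 1) k.succ_pos
    rw [show 2 * (k + 1) - 1 = 2 * k + 1 by omega, Nat.add_sub_cancel] at hu
    rw [hG₀, hG₁, Gk_zero_div_sub_Gk_one_div c k (hH₀ _) (hH₁ _), hu]
  have heven : ∀ k, u (2 * k) = Gext c u₀ 1 k / Hk c 1 k - Gext c u₀ 0 k / Hk c 0 k := by
    rintro (_ | k)
    · simp [Gext, Hk, hu0]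
    · rw [hG₀, hG₁, Gk_one_div_sub_Gk_zero_div c k (hH₀ _) (hH₁ _),
        hueven (k + 1) k.succ_pos, Nat.add_sub_cancel]
  obtain ⟨k, rfl⟩ : ∃ k, n = k + 1 := ⟨n - 1, by omega⟩
  rcases hm with rfl | rfl
  · rw [show 2 * (k + 1) - 2 + 0 = 2 * k by omega,
      show 2 * (k + 1) - 1 + 0 = 2 * k + 1 by omega, heven, hodd, Nat.add_sub_cancel]
    ring
  · rw [show 2 * (k + 1) - 2 + 1 = 2 * k + 1 by omega,
      show 2 * (k + 1) - 1 + 1 = 2 * (k + 1) by omega, hodd, heven, Nat.add_sub_cancel]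
    ring
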